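/- arXiv:2501.01703 — 2 statements merged into one kernel-verified Lean document; each statement's English description precedes it below -/
import Mathlib

section
/- If a graph G contains a bramble of order at least k, then for every vertex v of G, the graph G - v contains a bramble of order at least k - 1. -/
open SimpleGraph

variable {V : Type*}

/-- A bramble: a family of vertex sets, each inducing a connected subgraph,
pairwise intersecting or joined by an edge. -/
def IsBramble (G : SimpleGraph V) (B : Set (Set V)) : Prop :=
  (∀ S ∈ B, S.Nonempty ∧ (G.induce S).Connected) ∧
  (∀ S ∈ B, ∀ T ∈ B, (S ∩ T).Nonempty ∨ ∃ u ∈ S, ∃ v ∈ T, G.Adj u v)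

/-- `X` hits every element of the family `B`. -/
def HitsAll (B : Set (Set V)) (X : Set V) : Prop := ∀ S ∈ B, (S ∩ X).Nonempty

/-- The order of a bramble: minimum size of a hitting set. -/
noncomputable def brambleOrder (B : Set (Set V)) : ℕ :=
  sInf {n | ∃ X : Set V, X.Finite ∧ X.ncard = n ∧ HitsAll B X}

/-- The subfamily of elements of `B` meeting `X`. -/
def sub (B : Set (Set V)) (X : Set V) : Set (Set V) := {S ∈ B | (S ∩ X).Nonempty}

/-- If `G` contains a bramble of order at least `k`, then for every vertex `v`,
`G - v` contains a bramble of order at least `k - 1`. -/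
theorem stmt_0 [Fintype V] (G : SimpleGraph V) (B : Set (Set V)) (k : ℕ)
    (hB : IsBramble G B) (hord : k ≤ brambleOrder B) (v : V) :
    ∃ B' : Set (Set (({v}ᶜ : Set V) : Type _)),
      IsBramble (G.induce {v}ᶜ) B' ∧ k - 1 ≤ brambleOrder B' := by
  classical
  refine ⟨{S' | ∃ S ∈ B, v ∉ S ∧ S' = Subtype.val ⁻¹' S}, ⟨?_, ?_⟩, ?_⟩
  · rintro S' ⟨S, hS, hv, rfl⟩
    obtain ⟨hne, hconn⟩ := hB.1 S hS
    constructor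
    · obtain ⟨x, hx⟩ := hne
      exact ⟨⟨x, by simp only [Set.mem_compl_iff, Set.mem_singleton_iff]; rintro rfl; exact hv hx⟩, hx⟩
    · let e : (Subtype.val ⁻¹' S : Set ({v}ᶜ : Set V)) ≃ S :=
        { toFun := fun x => ⟨x.1.1, x.2⟩
          invFun := fun x => ⟨⟨x.1, by simp only [Set.mem_compl_iff, Set.mem_singleton_iff]; rintro rfl; exact hv x.2⟩, x.2⟩
          left_inv := fun x => rfl
          right_inv := fun x => rfl }
      have iso : ((G.induce ({v}ᶜ : Set V)).induce (Subtype.val ⁻¹' S)) ≃g (G.induce S) :=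
        ⟨e, Iff.rfl⟩
      exact iso.connected_iff.mpr hconn
  · rintro S' ⟨S, hS, hvS, rfl⟩ T' ⟨T, hT, hvT, rfl⟩
    rcases hB.2 S hS T hT with ⟨x, hxS, hxT⟩ | ⟨u, hu, w, hw, huw⟩
    · exact Or.inl ⟨⟨x, by simp only [Set.mem_compl_iff, Set.mem_singleton_iff]; rintro rfl; exact hvS hxS⟩, hxS, hxT⟩
    · refine Or.inr ⟨⟨u, ?_⟩, hu, ⟨w, ?_⟩, hw, huw⟩
      · simp only [Set.mem_compl_iff, Set.mem_singleton_iff]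
        rintro rfl; exact hvS hu
      · simp only [Set.mem_compl_iff, Set.mem_singleton_iff]
        rintro rfl; exact hvT hw
  · -- order bound
    apply le_csInf
    · refine ⟨(Set.univ : Set ({v}ᶜ : Set V)).ncard, Set.univ, Set.finite_univ, rfl, ?_⟩
      rintro S' ⟨S, hS, hv, rfl⟩
      obtain ⟨x, hx⟩ := (hB.1 S hS).1
      exact ⟨⟨x, by simp only [Set.mem_compl_iff, Set.mem_singleton_iff]; rintro rfl; exact hv hx⟩, hx, Set.mem_univ _⟩
    · rintro n ⟨X', hfin, hcard, hhit⟩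
      have hXfin : (insert v (Subtype.val '' X') : Set V).Finite :=
        (hfin.image _).insert v
      have hhitB : HitsAll B (insert v (Subtype.val '' X')) := by
        intro S hS
        by_cases hv : v ∈ S
        · exact ⟨v, hv, Set.mem_insert _ _⟩
        · obtain ⟨x, hxS, hxX⟩ := hhit (Subtype.val ⁻¹' S) ⟨S, hS, hv, rfl⟩
          exact ⟨x, hxS, Set.mem_insert_of_mem _ ⟨x, hxX, rfl⟩⟩
      have hle : brambleOrder B ≤ (insert v (Subtype.val '' X') : Set V).ncard :=
        Nat.sInf_le ⟨_, hXfin, rfl, hhitB⟩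
      have hcard2 : (insert v (Subtype.val '' X') : Set V).ncard ≤ n + 1 := by
        calc (insert v (Subtype.val '' X') : Set V).ncard
            ≤ (Subtype.val '' X').ncard + 1 := Set.ncard_insert_le _ _
          _ = X'.ncard + 1 := by rw [Set.ncard_image_of_injective _ Subtype.val_injective]
          _ = n + 1 := by rw [hcard]
      omega
end

section
/- Let G be a graph with a bramble B, and let S and T be subsets of V(G) such that both B_S (the elements of B meeting S) and B_T (the elements of B meeting T) have order at least ℓ. Then G contains ℓ pairwise vertex-disjoint paths each having one endpoint in S and one endpoint in T. -/
/-!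
If some `X` with `|X| < ℓ` separated `S` from `T`, then, as `B_S` has order greater than `|X|`,
some element `C` of `B` meeting `S` would avoid `X`, and likewise some `D` meeting `T`. Since `C`
and `D` are connected and touch, `C ∪ D` contains an `S`–`T` walk avoiding `X`. So every
`S`–`T` separator has at least `ℓ` vertices, and Menger's theorem gives the paths.

Menger's theorem is proved by induction on the number of edges. For an edge `xy`, either the
graph with `xy` contracted has no `A`–`B` separator of fewer than `k` vertices, and its `k`
disjoint paths lift back to `G`, or such a separator pulls back to an `A`–`B` separator `X` of
`G` with `|X| = k` and `x, y ∈ X`. In the latter case, in `G - xy` both `A` and `B` are joined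
to `X` by `k` disjoint paths; cut at their first vertex in `X`, the two path systems meet only
in `X` and glue to `k` disjoint `A`–`B` paths.
-/

open SimpleGraph

variable {V : Type*}

namespace SimpleGraph

variable {G H : SimpleGraph V} {A B X : Set V} {k : ℕ}

def IsSeparator (G : SimpleGraph V) (A B X : Set V) : Prop :=
  ∀ ⦃a b : V⦄, a ∈ A → b ∈ B → ∀ p : G.Walk a b, ∃ z ∈ p.support, z ∈ X

def HasDisjointPaths (G : SimpleGraph V) (A B : Set V) (k : ℕ) : Prop :=
  ∃ f : Fin k → Σ u v, G.Walk u v,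
    (∀ i, (f i).2.2.IsPath ∧ (f i).1 ∈ A ∧ (f i).2.1 ∈ B) ∧
    ∀ i j, i ≠ j → ∀ x ∈ (f i).2.2.support, x ∉ (f j).2.2.support

lemma IsSeparator.symm (h : G.IsSeparator A B X) : G.IsSeparator B A X := by
  intro b a hb ha p
  simpa using h ha hb p.reverse

namespace Walk

lemma exists_path_to_first_mem {u v : V} (p : G.Walk u v) (h : ∃ z ∈ p.support, z ∈ X) :
    ∃ w ∈ X, ∃ q : G.Walk u w,
      q.IsPath ∧ q.support ⊆ p.support ∧ ∀ z ∈ q.support, z ∈ X → z = w := by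
  classical
  suffices ∃ w ∈ X, ∃ q : G.Walk u w, q.support ⊆ p.support ∧ ∀ z ∈ q.support, z ∈ X → z = w by
    obtain ⟨w, hw, q, hqp, hqX⟩ := this
    have hbypass := q.support_bypass_subset_support
    exact ⟨w, hw, q.bypass, q.bypass_isPath, fun z hz => hqp (hbypass hz),
      fun z hz => hqX z (hbypass hz)⟩
  induction p with
  | nil =>
    obtain ⟨z, hz, hzX⟩ := h
    rw [support_nil, List.mem_singleton] at hz
    subst hz
    exact ⟨z, hzX, nil, by simp, by simp⟩
  | @cons u v' v hadj p ih =>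
    by_cases hu : u ∈ X
    · exact ⟨u, hu, nil, by simp, by simp⟩
    · obtain ⟨w, hw, q, hqp, hqX⟩ := ih (by simpa [hu] using h)
      refine ⟨w, hw, cons hadj q, ?_, ?_⟩
      · simpa using List.cons_subset_cons u hqp
      · simp only [support_cons, List.mem_cons, forall_eq_or_imp]
        exact ⟨fun h => (hu h).elim, hqX⟩

lemma IsPath.forall_notMem_support_takeUntil [DecidableEq V] {u v z : V} {p : G.Walk u v}
    (hp : p.IsPath) (hpX : ∀ t ∈ p.support, t ∈ X → t = v) (hz : z ∈ p.support) (hzX : z ∉ X) :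
    ∀ t ∈ (p.takeUntil z hz).support, t ∉ X := by
  intro t ht htX
  obtain rfl := hpX t (p.support_takeUntil_subset_support hz ht) htX
  exact endpoint_notMem_support_takeUntil hp hz (fun h => hzX (h ▸ htX)) ht

end Walk

lemma IsSeparator.mem_of_mem_support_of_mem_support (hX : G.IsSeparator A B X)
    {a b w w' z : V} (ha : a ∈ A) (hb : b ∈ B) {p : G.Walk a w} {q : G.Walk b w'}
    (hp : p.IsPath) (hq : q.IsPath)
    (hpX : ∀ t ∈ p.support, t ∈ X → t = w) (hqX : ∀ t ∈ q.support, t ∈ X → t = w')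
    (hzp : z ∈ p.support) (hzq : z ∈ q.support) : z ∈ X := by
  classical
  by_contra hz
  obtain ⟨t, ht, htX⟩ := hX ha hb ((p.takeUntil z hzp).append (q.takeUntil z hzq).reverse)
  rw [Walk.mem_support_append_iff, Walk.support_reverse, List.mem_reverse] at ht
  exact ht.elim (hp.forall_notMem_support_takeUntil hpX hzp hz t · htX)
    (hq.forall_notMem_support_takeUntil hqX hzq hz t · htX)

lemma IsSeparator.of_deleteEdges {x y : V} (hxy : x ≠ y) (hX : G.IsSeparator A B X)
    (hx : x ∈ X) (hy : y ∈ X) {Y : Set V} (hY : (G.deleteEdges {s(x, y)}).IsSeparator A X Y) :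
    G.IsSeparator A B Y := by
  intro a b ha hb p
  obtain ⟨w, hw, q, -, hqp, hqX⟩ := p.exists_path_to_first_mem (hX ha hb p)
  have hxyq : s(x, y) ∉ q.edges := fun he =>
    hxy ((hqX x (q.fst_mem_support_of_mem_edges he) hx).trans
      (hqX y (q.snd_mem_support_of_mem_edges he) hy).symm)
  obtain ⟨z, hz, hzY⟩ := hY ha hw (q.toDeleteEdge _ hxyq)
  exact ⟨z, hqp (by simpa using hz), hzY⟩

lemma HasDisjointPaths.of_walks {a b : Fin k → V} (p : ∀ i, G.Walk (a i) (b i))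
    (ha : ∀ i, a i ∈ A) (hb : ∀ i, b i ∈ B)
    (hp : ∀ i j, i ≠ j → ∀ z ∈ (p i).support, z ∉ (p j).support) :
    G.HasDisjointPaths A B k := by
  classical
  exact ⟨fun i => ⟨a i, b i, (p i).bypass⟩, fun i => ⟨(p i).bypass_isPath, ha i, hb i⟩,
    fun i j hij z hi hj => hp i j hij z ((p i).support_bypass_subset_support hi)
      ((p j).support_bypass_subset_support hj)⟩

lemma HasDisjointPaths.mono (hGH : G ≤ H) (h : G.HasDisjointPaths A B k) :
    H.HasDisjointPaths A B k := by
  obtain ⟨f, hf, hd⟩ := h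
  exact .of_walks (fun i => (f i).2.2.mapLe hGH) (fun i => (hf i).2.1) (fun i => (hf i).2.2)
    (by simpa only [Walk.support_mapLe_eq_support] using hd)

lemma injective_of_disjoint_support {ι : Type*} {a w : ι → V} {p : ∀ i, G.Walk (a i) (w i)}
    (hp : ∀ i j, i ≠ j → ∀ z ∈ (p i).support, z ∉ (p j).support) : Function.Injective w :=
  fun i j hij => by_contra fun hne =>
    hp i j hne _ (p i).end_mem_support (by rw [hij]; exact (p j).end_mem_support)


lemma HasDisjointPaths.exists_paths_to_first_mem (h : G.HasDisjointPaths A X k) :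
    ∃ (a w : Fin k → V) (q : ∀ i, G.Walk (a i) (w i)),
      (∀ i, a i ∈ A ∧ w i ∈ X ∧ (q i).IsPath ∧ ∀ z ∈ (q i).support, z ∈ X → z = w i) ∧
      ∀ i j, i ≠ j → ∀ z ∈ (q i).support, z ∉ (q j).support := by
  obtain ⟨f, hf, hd⟩ := h
  choose w hw q hq using fun i =>
    (f i).2.2.exists_path_to_first_mem ⟨_, (f i).2.2.end_mem_support, (hf i).2.2⟩
  exact ⟨fun i => (f i).1, w, q, fun i => ⟨(hf i).2.1, hw i, (hq i).1, (hq i).2.2⟩,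
    fun i j hij z hi hj => hd i j hij z ((hq i).2.1 hi) ((hq j).2.1 hj)⟩

lemma IsSeparator.hasDisjointPaths (hX : G.IsSeparator A B X) (hXk : X.ncard = k)
    (hA : G.HasDisjointPaths A X k) (hB : G.HasDisjointPaths B X k) :
    G.HasDisjointPaths A B k := by
  obtain ⟨a, wA, qA, hqA, hdA⟩ := hA.exists_paths_to_first_mem
  obtain ⟨b, wB, qB, hqB, hdB⟩ := hB.exists_paths_to_first_mem
  have hwA : Function.Injective wA := injective_of_disjoint_support hdA
  have hmeet : ∀ i j z, z ∈ (qA i).support → z ∈ (qB j).support → wA i = wB j := by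
    intro i j z hzi hzj
    have hz := hX.mem_of_mem_support_of_mem_support (hqA i).1 (hqB j).1 (hqA i).2.2.1
      (hqB j).2.2.1 (hqA i).2.2.2 (hqB j).2.2.2 hzi hzj
    exact ((hqA i).2.2.2 z hzi hz).symm.trans ((hqB j).2.2.2 z hzj hz)
  have hσ : ∀ i, ∃ j, wB j = wA i := by
    intro i
    have : Finite X := Set.finite_of_ncard_pos (hXk ▸ i.pos)
    have hinj : Function.Injective fun j => (⟨wB j, (hqB j).2.1⟩ : X) :=
      fun j j' h => injective_of_disjoint_support hdB (congrArg Subtype.val h)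
    have hcard : Nat.card X ≤ Nat.card (Fin k) := by simp [Nat.card_coe_set_eq, hXk]
    obtain ⟨j, hj⟩ := (hinj.bijective_of_nat_card_le hcard).2 ⟨wA i, (hqA i).2.1⟩
    exact ⟨j, congrArg Subtype.val hj⟩
  choose σ hσ using hσ
  refine .of_walks (fun i => (qA i).append ((qB (σ i)).reverse.copy (hσ i) rfl))
    (fun i => (hqA i).1) (fun i => (hqB (σ i)).1) fun i j hij z hzi hzj => ?_
  simp only [Walk.mem_support_append_iff, Walk.support_copy, Walk.support_reverse,
    List.mem_reverse] at hzi hzj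
  rcases hzi with hzi | hzi <;> rcases hzj with hzj | hzj
  · exact hdA i j hij z hzi hzj
  · exact hij (hwA (by rw [hmeet i (σ j) z hzi hzj, hσ]))
  · exact hij (hwA (by rw [hmeet j (σ i) z hzj hzi, hσ])).symm
  · exact hdB _ _ (fun h => hij (hwA (by rw [← hσ i, ← hσ j, h]))) z hzi hzj

lemma hasDisjointPaths_of_forall_not_adj [Finite V] (hE : ∀ a b, ¬ G.Adj a b)
    (hk : ∀ X, G.IsSeparator A B X → k ≤ X.ncard) : G.HasDisjointPaths A B k := by
  have hsep : G.IsSeparator A B (A ∩ B) := by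
    rintro a b ha hb (_ | ⟨hadj, _⟩)
    · exact ⟨a, Walk.start_mem_support _, ha, hb⟩
    · exact (hE _ _ hadj).elim
  classical
  have := Fintype.ofFinite V
  obtain ⟨e⟩ : Nonempty (Fin k ↪ ↥(A ∩ B)) := Function.Embedding.nonempty_of_card_le (by
    rw [Fintype.card_fin, ← Nat.card_eq_fintype_card, Nat.card_coe_set_eq]
    exact hk _ hsep)
  refine .of_walks (fun i => (Walk.nil : G.Walk (e i) (e i))) (fun i => (e i).2.1)
    (fun i => (e i).2.2) fun i j hij z hi hj => hij (e.injective (Subtype.ext ?_))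
  simp only [Walk.support_nil, List.mem_singleton] at hi hj
  exact hi.symm.trans hj

section map

variable {W : Type*} {f : V → W}

lemma Walk.exists_walk_map {u v : V} (p : G.Walk u v) :
    ∃ q : (G.map f).Walk (f u) (f v), q.support ⊆ p.support.map f := by
  induction p with
  | nil => exact ⟨.nil, by simp⟩
  | @cons a c b hadj p ih =>
    obtain ⟨q, hq⟩ := ih
    by_cases hac : f a = f c
    · refine ⟨q.copy hac.symm rfl, fun z hz => ?_⟩
      rw [Walk.support_copy] at hz
      simpa using Or.inr (List.mem_map.1 (hq hz))
    · exact ⟨.cons (map_adj_apply' hadj hac) q, by simpa using List.cons_subset_cons _ hq⟩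

lemma Walk.exists_walk_of_map
    (hfib : ∀ a b, f a = f b → ∃ r : G.Walk a b, ∀ z ∈ r.support, f z = f a)
    {c d : W} (p : (G.map f).Walk c d) {a b : V} (ha : f a = c) (hb : f b = d) :
    ∃ q : G.Walk a b, ∀ z ∈ q.support, f z ∈ p.support := by
  induction p generalizing a with
  | nil =>
    obtain ⟨r, hr⟩ := hfib a b (ha.trans hb.symm)
    exact ⟨r, fun z hz => by simp [hr z hz, ha]⟩
  | cons hadj p ih =>
    obtain ⟨-, a', c', hadj', rfl, rfl⟩ := (map_adj' f G _ _).1 hadj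
    obtain ⟨r, hr⟩ := hfib a a' ha
    obtain ⟨q, hq⟩ := ih rfl hb
    refine ⟨r.append (.cons hadj' q), fun z hz => ?_⟩
    simp only [Walk.mem_support_append_iff, Walk.support_cons, List.mem_cons] at hz ⊢
    rcases hz with hz | rfl | hz
    · exact .inl ((hr z hz).trans ha)
    · exact .inl rfl
    · exact .inr (hq z hz)

lemma IsSeparator.preimage {Z : Set W} (hZ : (G.map f).IsSeparator (f '' A) (f '' B) Z) :
    G.IsSeparator A B (f ⁻¹' Z) := by
  intro a b ha hb p
  obtain ⟨q, hq⟩ := p.exists_walk_map (f := f)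
  obtain ⟨z, hz, hzZ⟩ := hZ ⟨a, ha, rfl⟩ ⟨b, hb, rfl⟩ q
  obtain ⟨t, ht, rfl⟩ := List.mem_map.1 (hq hz)
  exact ⟨t, ht, hzZ⟩

lemma HasDisjointPaths.of_map
    (hfib : ∀ a b, f a = f b → ∃ r : G.Walk a b, ∀ z ∈ r.support, f z = f a)
    (h : (G.map f).HasDisjointPaths (f '' A) (f '' B) k) : G.HasDisjointPaths A B k := by
  obtain ⟨F, hF, hd⟩ := h
  choose a ha hfa using fun i => (hF i).2.1
  choose b hb hfb using fun i => (hF i).2.2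
  choose q hq using fun i => Walk.exists_walk_of_map hfib (F i).2.2 (hfa i) (hfb i)
  exact .of_walks q ha hb fun i j hij z hi hj => hd i j hij _ (hq i z hi) (hq j z hj)

lemma ncard_edgeSet_map_lt [Finite V] {x y : V} (hxy : G.Adj x y) (hf : f x = f y) :
    (G.map f).edgeSet.ncard < G.edgeSet.ncard := by
  have hsub : (G.map f).edgeSet ⊂ Sym2.map f '' G.edgeSet := by
    refine ⟨fun e he => ?_, fun h => ?_⟩
    · induction e using Sym2.ind with
      | _ u v =>
        obtain ⟨-, a, b, hadj, rfl, rfl⟩ := he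
        exact ⟨s(a, b), hadj, rfl⟩
    · have := h ⟨s(x, y), hxy, rfl⟩
      simp [hf] at this
  calc (G.map f).edgeSet.ncard < (Sym2.map f '' G.edgeSet).ncard :=
        Set.ncard_lt_ncard hsub (G.edgeSet.toFinite.image _)
    _ ≤ G.edgeSet.ncard := Set.ncard_image_le G.edgeSet.toFinite

end map

section merge

/-! Contracting `xy` is modelled as `G.map (Function.update id y x)`: `y` is merged into `x` and
left isolated, so the vertex type does not change. -/

variable [DecidableEq V] {x y : V}

lemma exists_walk_of_update_eq (hxy : G.Adj x y) {a b : V}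
    (h : Function.update id y x a = Function.update id y x b) :
    ∃ r : G.Walk a b, ∀ z ∈ r.support, Function.update id y x z = Function.update id y x a := by
  by_cases hab : a = b
  · subst hab
    exact ⟨.nil, by simp⟩
  have hadj : G.Adj a b := by
    simp only [Function.update_apply, id] at h
    split_ifs at h <;> subst_vars
    exacts [absurd rfl hab, hxy.symm, hxy, absurd rfl hab]
  exact ⟨.cons hadj .nil, by simp [h]⟩

lemma exists_separator_of_map_update [Finite V] (hk : ∀ X, G.IsSeparator A B X → k ≤ X.ncard)
    {Z : Set V} (hZ : (G.map (Function.update id y x)).IsSeparator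
      (Function.update id y x '' A) (Function.update id y x '' B) Z) (hZk : Z.ncard < k) :
    ∃ X, G.IsSeparator A B X ∧ x ∈ X ∧ y ∈ X ∧ X.ncard = k := by
  set f := Function.update id y x
  have hX := hk _ hZ.preimage
  have hsub : f ⁻¹' Z ⊆ insert y Z := fun z hz => by
    by_cases hzy : z = y
    · exact .inl hzy
    · exact .inr (by simpa [f, hzy] using hz)
  have hy : y ∈ f ⁻¹' Z := by
    by_contra hy
    have : f ⁻¹' Z ⊆ Z := fun z hz => (hsub hz).resolve_left fun h => hy (h ▸ hz)
    exact (hX.trans (Set.ncard_le_ncard this)).not_gt hZk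
  refine ⟨_, hZ.preimage, ?_, hy, le_antisymm ?_ hX⟩
  · by_cases hxy : x = y
    · exact hxy ▸ hy
    · simpa [f, Function.update_of_ne hxy] using hy
  · calc (f ⁻¹' Z).ncard ≤ (insert y Z).ncard := Set.ncard_le_ncard hsub
      _ ≤ Z.ncard + 1 := Set.ncard_insert_le _ _
      _ ≤ k := hZk

end merge

theorem menger [Finite V] (G : SimpleGraph V) (A B : Set V) (k : ℕ)
    (hk : ∀ X, G.IsSeparator A B X → k ≤ X.ncard) : G.HasDisjointPaths A B k := by
  classical
  induction hn : G.edgeSet.ncard using Nat.strong_induction_on generalizing G A B with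
  | _ n ih =>
  subst hn
  replace ih : ∀ H : SimpleGraph V, H.edgeSet.ncard < G.edgeSet.ncard → ∀ A B : Set V,
      (∀ X, H.IsSeparator A B X → k ≤ X.ncard) → H.HasDisjointPaths A B k :=
    fun H hH A B hk => ih _ hH H A B hk rfl
  by_cases hE : ∃ x y, G.Adj x y
  swap
  · push Not at hE
    exact hasDisjointPaths_of_forall_not_adj hE hk
  obtain ⟨x, y, hxy⟩ := hE
  set f := Function.update id y x
  by_cases hZ : ∀ Z, (G.map f).IsSeparator (f '' A) (f '' B) Z → k ≤ Z.ncard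
  · exact (ih _ (ncard_edgeSet_map_lt hxy (by simp [f, Function.update_of_ne hxy.ne])) _ _ hZ).of_map
      fun _ _ => exists_walk_of_update_eq hxy
  push Not at hZ
  obtain ⟨Z, hZ, hZk⟩ := hZ
  obtain ⟨X, hX, hx, hy, hXk⟩ := exists_separator_of_map_update hk hZ hZk
  have hlt : (G.deleteEdges {s(x, y)}).edgeSet.ncard < G.edgeSet.ncard := by
    rw [edgeSet_deleteEdges]
    exact Set.ncard_sdiff_singleton_lt_of_mem hxy
  have hAX := ih _ hlt A X fun Y hY => hk Y (hX.of_deleteEdges hxy.ne hx hy hY)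
  have hBX := ih _ hlt B X fun Y hY => hk Y (hX.symm.of_deleteEdges hxy.ne hx hy hY).symm
  exact hX.hasDisjointPaths hXk (hAX.mono (deleteEdges_le _)) (hBX.mono (deleteEdges_le _))

lemma exists_walk_of_connected_induce {C : Set V} (hC : (G.induce C).Connected) {a b : V}
    (ha : a ∈ C) (hb : b ∈ C) : ∃ p : G.Walk a b, ∀ z ∈ p.support, z ∈ C := by
  obtain ⟨p⟩ := hC.preconnected ⟨a, ha⟩ ⟨b, hb⟩
  refine ⟨p.map (Embedding.induce C).toHom, fun z hz => ?_⟩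
  -- `hz` mentions the endpoints only up to defeq, which blocks `Walk.support_map`
  replace hz : z ∈ (p.map (Embedding.induce C).toHom).support := hz
  rw [Walk.support_map] at hz
  obtain ⟨⟨z, hzC⟩, -, rfl⟩ := List.mem_map.1 hz
  exact hzC

end SimpleGraph

lemma IsBramble.exists_walk {G : SimpleGraph V} {B : Set (Set V)} (hB : IsBramble G B)
    {C D : Set V} (hC : C ∈ B) (hD : D ∈ B) {s t : V} (hs : s ∈ C) (ht : t ∈ D) :
    ∃ p : G.Walk s t, ∀ z ∈ p.support, z ∈ C ∪ D := by
  obtain ⟨u, huC, v, hvD, r, hr⟩ :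
      ∃ u ∈ C, ∃ v ∈ D, ∃ r : G.Walk u v, ∀ z ∈ r.support, z ∈ C ∪ D := by
    rcases hB.2 C hC D hD with ⟨u, huC, huD⟩ | ⟨u, huC, v, hvD, huv⟩
    · exact ⟨u, huC, u, huD, .nil, by simp [huC]⟩
    · exact ⟨u, huC, v, hvD, .cons huv .nil, by simp [huC, hvD]⟩
  obtain ⟨p, hp⟩ := exists_walk_of_connected_induce (hB.1 C hC).2 hs huC
  obtain ⟨q, hq⟩ := exists_walk_of_connected_induce (hB.1 D hD).2 hvD ht
  refine ⟨p.append (r.append q), fun z hz => ?_⟩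
  simp only [Walk.mem_support_append_iff] at hz
  rcases hz with hz | hz | hz
  exacts [.inl (hp z hz), hr z hz, .inr (hq z hz)]

lemma brambleOrder_le_ncard [Finite V] {B : Set (Set V)} {X : Set V} (h : HitsAll B X) :
    brambleOrder B ≤ X.ncard :=
  Nat.sInf_le ⟨X, X.toFinite, rfl, h⟩

/-- If both `B_S` and `B_T` have order at least `ℓ`, then there are `ℓ` pairwise
vertex-disjoint `S`–`T` paths. -/
theorem stmt_2 [Fintype V] (G : SimpleGraph V) (B : Set (Set V)) (S T : Set V) (ℓ : ℕ)
    (hB : IsBramble G B)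
    (hS : ℓ ≤ brambleOrder (sub B S)) (hT : ℓ ≤ brambleOrder (sub B T)) :
    ∃ f : Fin ℓ → Σ u v, G.Walk u v,
      (∀ i, (f i).2.2.IsPath ∧ (f i).1 ∈ S ∧ (f i).2.1 ∈ T) ∧
      ∀ i j, i ≠ j → ∀ x ∈ (f i).2.2.support, x ∉ (f j).2.2.support := by
  refine menger G S T ℓ fun X hX => ?_
  by_contra! hXℓ
  have hmiss : ∀ W, ℓ ≤ brambleOrder (sub B W) →
      ∃ C ∈ B, (C ∩ W).Nonempty ∧ ¬ (C ∩ X).Nonempty := by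
    intro W hW
    by_contra! h
    exact (brambleOrder_le_ncard fun C hC => h C hC.1 hC.2).not_gt (hXℓ.trans_le hW)
  obtain ⟨C, hC, ⟨s, hsC, hsS⟩, hCX⟩ := hmiss S hS
  obtain ⟨D, hD, ⟨t, htD, htT⟩, hDX⟩ := hmiss T hT
  obtain ⟨p, hp⟩ := hB.exists_walk hC hD hsC htD
  obtain ⟨z, hz, hzX⟩ := hX hsS htT p
  rcases hp z hz with hzC | hzD
  exacts [hCX ⟨z, hzC, hzX⟩, hDX ⟨z, hzD, hzX⟩]
end
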